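/- arXiv:2511.15176 — 2 statements merged into one kernel-verified Lean document; each statement's English description precedes it below -/
import Mathlib

section
/- Let π*(u,v) be the unique root of g(π,u,v) = -δγν(e^{-δ(πγ-v)}-1) + δ²(σ²+(σ⁰)²)π - δ²σ⁰u - δμ with γ < 0, ν > 0, δ > 0, σ > 0. Then for fixed u, the map v ↦ π*(u,v) is strictly decreasing, and for fixed v, the map u ↦ π*(u,v) is strictly increasing when σ⁰ > 0. -/
open Real

/- `g` is strictly increasing in `π` and in `v` (through the exponential term, since `-δγ > 0`)
and strictly decreasing in `u`; a root of a function that is increasing in both the unknown and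
the parameter must move against the parameter, and with it when the function decreases in the
parameter. -/

section RootMonotonicity

variable {α β γ : Type*} [LinearOrder α] [Preorder β] [Preorder γ]
  {f : α → β → γ} {r : β → α} {c : γ}

theorem strictAnti_of_apply_eq (hx : ∀ t, StrictMono (f · t)) (ht : ∀ x, StrictMono (f x))
    (hr : ∀ t, f (r t) t = c) : StrictAnti r := by
  intro s t hst
  have h : f (r t) s < f (r s) s :=
    calc f (r t) s < f (r t) t := ht _ hst
      _ = f (r s) s := by rw [hr, hr]
  exact (hx s).lt_iff_lt.1 h

theorem strictMono_of_apply_eq (hx : ∀ t, StrictMono (f · t)) (ht : ∀ x, StrictAnti (f x))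
    (hr : ∀ t, f (r t) t = c) : StrictMono r := by
  intro s t hst
  have h : f (r s) s < f (r t) s :=
    calc f (r s) s = f (r t) t := by rw [hr, hr]
      _ < f (r t) s := ht _ hst
  exact (hx s).lt_iff_lt.1 h

end RootMonotonicity

theorem stmt13_general (δ σ σ0 γ μ ν : ℝ)
    (hδ : 0 < δ) (hσ0 : 0 < σ0) (hγ : γ < 0) (hν : 0 < ν)
    (g : ℝ → ℝ → ℝ → ℝ)
    (hg : ∀ p u v : ℝ, g p u v = -δ * γ * ν * (Real.exp (-δ * (p * γ - v)) - 1)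
        + δ ^ 2 * (σ ^ 2 + σ0 ^ 2) * p - δ ^ 2 * σ0 * u - δ * μ)
    (pstar : ℝ → ℝ → ℝ)
    (hroot : ∀ u v : ℝ, g (pstar u v) u v = 0) :
    (∀ u : ℝ, StrictAnti (fun v => pstar u v)) ∧
      (∀ v : ℝ, StrictMono (fun u => pstar u v)) := by
  have hA : 0 < -δ * γ * ν := by nlinarith [mul_pos (mul_pos hδ (neg_pos.2 hγ)) hν]
  have hB : 0 ≤ δ ^ 2 * (σ ^ 2 + σ0 ^ 2) := by positivity
  have mono_p : ∀ u v, StrictMono fun p => g p u v := by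
    intro u v p q hpq
    have hexp : exp (-δ * (p * γ - v)) < exp (-δ * (q * γ - v)) := exp_lt_exp.2 (by nlinarith)
    simp only [hg]
    nlinarith [mul_lt_mul_of_pos_left hexp hA]
  have mono_v : ∀ p u, StrictMono (g p u) := by
    intro p u v w hvw
    have hexp : exp (-δ * (p * γ - v)) < exp (-δ * (p * γ - w)) := exp_lt_exp.2 (by nlinarith)
    simp only [hg]
    nlinarith [mul_lt_mul_of_pos_left hexp hA]
  have anti_u : ∀ p v, StrictAnti fun u => g p u v := by
    intro p v u w huw
    simp only [hg]
    nlinarith [mul_pos (pow_pos hδ 2) hσ0]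
  exact ⟨fun u => strictAnti_of_apply_eq (f := fun p v => g p u v) (mono_p u) (mono_v · u)
      (hroot u),
    fun v => strictMono_of_apply_eq (f := fun p u => g p u v) (mono_p · v) (anti_u · v)
      (hroot · v)⟩

theorem stmt13 (δ σ σ0 γ μ ν : ℝ)
    (hδ : 0 < δ) (hσ : 0 < σ) (hσ0 : 0 < σ0) (hγ : γ < 0) (hν : 0 < ν)
    (g : ℝ → ℝ → ℝ → ℝ)
    (hg : ∀ p u v : ℝ, g p u v = -δ * γ * ν * (Real.exp (-δ * (p * γ - v)) - 1)
        + δ ^ 2 * (σ ^ 2 + σ0 ^ 2) * p - δ ^ 2 * σ0 * u - δ * μ)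
    (pstar : ℝ → ℝ → ℝ)
    (hroot : ∀ u v : ℝ, g (pstar u v) u v = 0) :
    (∀ u : ℝ, StrictAnti (fun v => pstar u v)) ∧
      (∀ v : ℝ, StrictMono (fun u => pstar u v)) :=
  stmt13_general δ σ σ0 γ μ ν hδ hσ0 hγ hν g hg pstar hroot
end

section
/- Let π*(u,v) be the unique root of g(π,u,v)=0 as above with γ ≠ 0, ν ≥ 0. Then for all (u,v) and (u',v'), |π*(u,v) - π*(u',v')| ≤ (|σ⁰|/(σ²+(σ⁰)²))·|u-u'| + (1/|γ|)·|v-v'|. -/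
/-!
Dividing by `δ`, the root equation reads `a p + φ (p - v / γ) = δ σ⁰ u + const` with
`a = δ (σ² + (σ⁰)²) > 0` and `φ s = -γ ν exp (-δ γ s)` nondecreasing. A nondecreasing
perturbation of a strictly increasing linear map can only shrink the displacement of the root,
so `p` moves by at most `|δ σ⁰ Δu| / a` plus the shift `|Δv| / |γ|` of the argument of `φ`.
-/

open Real

theorem monotone_neg_mul_mul_exp {δ ν : ℝ} (hδ : 0 ≤ δ) (hν : 0 ≤ ν) (γ : ℝ) :
    Monotone fun s => -γ * ν * exp (-δ * γ * s) := by
  intro s t hst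
  dsimp only
  rcases le_total 0 γ with hγ | hγ
  · have hexp : exp (-δ * γ * t) ≤ exp (-δ * γ * s) :=
      exp_le_exp.2 (by nlinarith [mul_nonneg hδ hγ])
    nlinarith [mul_nonneg hγ hν]
  · have hexp : exp (-δ * γ * s) ≤ exp (-δ * γ * t) :=
      exp_le_exp.2 (by nlinarith [mul_nonneg hδ (neg_nonneg.2 hγ)])
    nlinarith [mul_nonneg (neg_nonneg.2 hγ) hν]

section MonotonePerturbation

variable {φ : ℝ → ℝ} {a p p' w w' r r' : ℝ}

theorem sub_le_of_mul_add_monotone_eq (hφ : Monotone φ) (ha : 0 < a)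
    (h : a * p + φ (p - w) = r) (h' : a * p' + φ (p' - w') = r') :
    p - p' ≤ |r - r'| / a + |w - w'| := by
  by_contra! hlt
  have : 0 ≤ |r - r'| / a := by positivity
  have hφle : φ (p' - w') ≤ φ (p - w) := hφ (by linarith [le_abs_self (w - w')])
  have hgap : |r - r'| < a * (p - p') := by
    rw [← div_lt_iff₀' ha]
    linarith [abs_nonneg (w - w')]
  linarith [le_abs_self (r - r')]

theorem abs_sub_le_of_mul_add_monotone_eq (hφ : Monotone φ) (ha : 0 < a)
    (h : a * p + φ (p - w) = r) (h' : a * p' + φ (p' - w') = r') :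
    |p - p'| ≤ |r - r'| / a + |w - w'| := by
  refine abs_sub_le_iff.2 ⟨sub_le_of_mul_add_monotone_eq hφ ha h h', ?_⟩
  rw [abs_sub_comm r, abs_sub_comm w]
  exact sub_le_of_mul_add_monotone_eq hφ ha h' h

end MonotonePerturbation

theorem stmt14 (δ σ σ0 γ μ ν : ℝ)
    (hδ : 0 < δ) (hσ : 0 < σ) (hγ : γ ≠ 0) (hν : 0 ≤ ν)
    (g : ℝ → ℝ → ℝ → ℝ)
    (hg : ∀ p u v : ℝ, g p u v = -δ * γ * ν * (Real.exp (-δ * (p * γ - v)) - 1)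
        + δ ^ 2 * (σ ^ 2 + σ0 ^ 2) * p - δ ^ 2 * σ0 * u - δ * μ)
    (pstar : ℝ → ℝ → ℝ)
    (hroot : ∀ u v : ℝ, g (pstar u v) u v = 0) :
    ∀ u v u' v' : ℝ,
      |pstar u v - pstar u' v'| ≤
        (|σ0| / (σ ^ 2 + σ0 ^ 2)) * |u - u'| + (1 / |γ|) * |v - v'| := by
  intro u v u' v'
  have hroot' : ∀ u v, δ * (σ ^ 2 + σ0 ^ 2) * pstar u v
      + -γ * ν * exp (-δ * γ * (pstar u v - v / γ)) = δ * σ0 * u + (μ - γ * ν) := by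
    intro u v
    have h := hroot u v
    rw [hg] at h
    have hexp : -δ * γ * (pstar u v - v / γ) = -δ * (pstar u v * γ - v) := by
      field_simp
    rw [hexp]
    apply mul_left_cancel₀ hδ.ne'
    linear_combination h
  calc |pstar u v - pstar u' v'|
      ≤ |δ * σ0 * u + (μ - γ * ν) - (δ * σ0 * u' + (μ - γ * ν))| / (δ * (σ ^ 2 + σ0 ^ 2))
          + |v / γ - v' / γ| :=
        abs_sub_le_of_mul_add_monotone_eq (monotone_neg_mul_mul_exp hδ.le hν γ)
          (by positivity) (hroot' u v) (hroot' u' v')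
    _ = (|σ0| / (σ ^ 2 + σ0 ^ 2)) * |u - u'| + (1 / |γ|) * |v - v'| := by
      rw [← sub_div, abs_div, add_sub_add_right_eq_sub, ← mul_sub, abs_mul, abs_mul,
        abs_of_pos hδ]
      field_simp
end
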